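/- arXiv:2003.07334 — 5 statements merged into one kernel-verified Lean document; each statement's English description precedes it below -/
import Mathlib

section
/- Let T be symmetric positive definite, λ ∈ (0,1), P symmetric positive definite, ψ an m×n real matrix, and D = λT + ψᵀPψ. Then the matrix C = ψ[T^{-1} − D^{-1}ψᵀPψT^{-1} − λD^{-1} − T^{-1}ψᵀPψD^{-1} + λD^{-1}ψᵀPψD^{-1} + D^{-1}ψᵀPψT^{-1}ψᵀPψD^{-1}]ψᵀ is the zero matrix. -/
open Matrix

namespace Matrix

variable {ι K : Type*} [Fintype ι] [DecidableEq ι] [CommRing K]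
  {T S D : Matrix ι ι K} {c : K}

theorem inv_mul_mul_inv_eq_of_eq_smul_add (hT : IsUnit T.det) (hD : IsUnit D.det)
    (hDTS : D = c • T + S) : D⁻¹ * S * T⁻¹ = T⁻¹ - c • D⁻¹ := by
  have hS : S = D - c • T := eq_sub_of_add_eq' hDTS.symm
  rw [hS, Matrix.mul_sub, Matrix.sub_mul, nonsing_inv_mul D hD, Matrix.one_mul, Matrix.mul_smul,
    Matrix.smul_mul, Matrix.mul_assoc, mul_nonsing_inv T hT, Matrix.mul_one]

theorem inv_mul_mul_inv_eq_of_eq_smul_add' (hT : IsUnit T.det) (hD : IsUnit D.det)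
    (hDTS : D = c • T + S) : T⁻¹ * S * D⁻¹ = T⁻¹ - c • D⁻¹ := by
  have hS : S = D - c • T := eq_sub_of_add_eq' hDTS.symm
  rw [hS, Matrix.mul_sub, Matrix.sub_mul, Matrix.mul_assoc, mul_nonsing_inv D hD, Matrix.mul_one,
    Matrix.mul_smul, nonsing_inv_mul T hT, Matrix.smul_mul, Matrix.one_mul]

/-- Both cross terms equal `T⁻¹ - c • D⁻¹`, after which everything cancels. -/
theorem inv_sub_inv_mul_mul_inv_sub_eq_zero (hT : IsUnit T.det) (hD : IsUnit D.det)
    (hDTS : D = c • T + S) :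
    T⁻¹ - D⁻¹ * S * T⁻¹ - c • D⁻¹ - T⁻¹ * S * D⁻¹ + c • (D⁻¹ * S * D⁻¹)
      + D⁻¹ * S * T⁻¹ * S * D⁻¹ = 0 := by
  have hDST := inv_mul_mul_inv_eq_of_eq_smul_add hT hD hDTS
  have hTSD := inv_mul_mul_inv_eq_of_eq_smul_add' hT hD hDTS
  rw [Matrix.mul_assoc (D⁻¹ * S * T⁻¹), hDST, Matrix.sub_mul, Matrix.smul_mul]
  simp only [← Matrix.mul_assoc, hTSD]
  abel

end Matrix

/-- The matrix `C` appearing in the Lyapunov difference of the RLSFF analysis is zero. -/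
theorem stmt3 {n m : ℕ} (T : Matrix (Fin n) (Fin n) ℝ) (hT : T.PosDef)
    (lam : ℝ) (hlam : lam ∈ Set.Ioo (0 : ℝ) 1)
    (P : Matrix (Fin m) (Fin m) ℝ) (hP : P.PosDef)
    (ψ : Matrix (Fin m) (Fin n) ℝ)
    (D : Matrix (Fin n) (Fin n) ℝ) (hD : D = lam • T + ψᵀ * P * ψ) :
    ψ * (T⁻¹ - D⁻¹ * ψᵀ * P * ψ * T⁻¹ - lam • D⁻¹ - T⁻¹ * ψᵀ * P * ψ * D⁻¹
        + lam • (D⁻¹ * ψᵀ * P * ψ * D⁻¹)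
        + D⁻¹ * ψᵀ * P * ψ * T⁻¹ * ψᵀ * P * ψ * D⁻¹) * ψᵀ = 0 := by
  have hDpos : D.PosDef :=
    hD ▸ (hT.smul hlam.1).add_posSemidef (hP.posSemidef.conjTranspose_mul_mul_same ψ)
  have key := inv_sub_inv_mul_mul_inv_sub_eq_zero ((isUnit_iff_isUnit_det T).mp hT.isUnit)
    ((isUnit_iff_isUnit_det D).mp hDpos.isUnit) hD
  simp only [Matrix.mul_assoc] at key ⊢
  rw [key, Matrix.zero_mul, Matrix.mul_zero]
end

section
/- Let λ ∈ (0,1), c > 0, S ∈ ℕ, and let {Q_k} be a sequence of symmetric positive semidefinite m×m matrices with Q_k ⪰ λ Q_{k-1} for all k, and Q_{j-1} + Q_j + ⋯ + Q_{j+S-1} ⪰ c·I for all j ≥ 1. Then Q_{k} ⪰ [c(λ^{-1}−1)/(λ^{-(S+1)}−1)]·I for all k ≥ S. -/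
/-!
Iterating `λ Q_k ⪯ Q_{k+1}` gives `Q_{k-S+i} ⪯ λ^{-(S-i)} Q_k`, so the window ending at `k`
is dominated by `(1 + λ⁻¹ + ⋯ + λ^{-S}) Q_k`; dividing the window bound `c I` by this geometric
sum gives the claim. The argument only uses that the Loewner order makes square real matrices an
ordered real vector space.
-/

open Finset

theorem pow_smul_le_of_forall_smul_le_succ {𝕜 M : Type*} [Semiring 𝕜] [PartialOrder 𝕜]
    [AddCommMonoid M] [PartialOrder M] [Module 𝕜 M] [PosSMulMono 𝕜 M] {lam : 𝕜} {Q : ℕ → M}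
    (hlam : 0 ≤ lam) (hstep : ∀ k, lam • Q k ≤ Q (k + 1)) (n d : ℕ) :
    lam ^ d • Q n ≤ Q (n + d) := by
  induction d with
  | zero => simp
  | succ d ih =>
    calc lam ^ (d + 1) • Q n = lam • lam ^ d • Q n := by rw [pow_succ', mul_smul]
      _ ≤ lam • Q (n + d) := smul_le_smul_of_nonneg_left ih hlam
      _ ≤ Q (n + d + 1) := hstep _

section OrderedModule

variable {𝕜 M : Type*} [Field 𝕜] [LinearOrder 𝕜] [IsStrictOrderedRing 𝕜]
  [AddCommGroup M] [PartialOrder M] [Module 𝕜 M] [PosSMulMono 𝕜 M]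
  {lam : 𝕜} {Q : ℕ → M}

theorem le_inv_pow_smul_of_forall_smul_le_succ (hlam : 0 < lam)
    (hstep : ∀ k, lam • Q k ≤ Q (k + 1)) (n d : ℕ) : Q n ≤ lam⁻¹ ^ d • Q (n + d) := by
  calc Q n = lam⁻¹ ^ d • lam ^ d • Q n := by
        rw [smul_smul, ← mul_pow, inv_mul_cancel₀ hlam.ne', one_pow, one_smul]
    _ ≤ lam⁻¹ ^ d • Q (n + d) :=
        smul_le_smul_of_nonneg_left (pow_smul_le_of_forall_smul_le_succ hlam.le hstep n d)
          (by positivity)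

theorem le_geom_sum_inv_smul_of_le_window_sum [IsOrderedAddMonoid M] (hlam : 0 < lam)
    (hstep : ∀ k, lam • Q k ≤ Q (k + 1)) {S : ℕ} {b : M}
    (hwin : ∀ j, b ≤ ∑ i ∈ range (S + 1), Q (j + i)) {k : ℕ} (hk : S ≤ k) :
    b ≤ (∑ i ∈ range (S + 1), lam⁻¹ ^ i) • Q k := by
  have hterm : ∀ i ∈ range (S + 1), Q (k - S + i) ≤ lam⁻¹ ^ (S - i) • Q k := by
    intro i hi
    have hidx : k - S + i + (S - i) = k := by have := mem_range.1 hi; omega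
    simpa only [hidx] using le_inv_pow_smul_of_forall_smul_le_succ hlam hstep (k - S + i) (S - i)
  calc b ≤ ∑ i ∈ range (S + 1), Q (k - S + i) := hwin (k - S)
    _ ≤ ∑ i ∈ range (S + 1), lam⁻¹ ^ (S - i) • Q k := sum_le_sum hterm
    _ = (∑ i ∈ range (S + 1), lam⁻¹ ^ i) • Q k := by
        rw [← sum_smul, ← sum_range_reflect (lam⁻¹ ^ ·) (S + 1), add_tsub_cancel_right]

theorem smul_le_of_smul_le_window_sum [IsOrderedAddMonoid M] (hlam₀ : 0 < lam) (hlam₁ : lam ≠ 1)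
    (hstep : ∀ k, lam • Q k ≤ Q (k + 1)) {S : ℕ} (c : 𝕜) (e : M)
    (hwin : ∀ j, c • e ≤ ∑ i ∈ range (S + 1), Q (j + i)) {k : ℕ} (hk : S ≤ k) :
    (c * (lam⁻¹ - 1) / (lam⁻¹ ^ (S + 1) - 1)) • e ≤ Q k := by
  set G := ∑ i ∈ range (S + 1), lam⁻¹ ^ i with hG
  have hG_pos : 0 < G := sum_pos (fun i _ ↦ by positivity) ⟨0, by simp⟩
  have hcoef : c * (lam⁻¹ - 1) / (lam⁻¹ ^ (S + 1) - 1) = G⁻¹ * c := by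
    rw [hG, geom_sum_eq (inv_ne_one.2 hlam₁), inv_div, div_mul_eq_mul_div, mul_comm]
  calc (c * (lam⁻¹ - 1) / (lam⁻¹ ^ (S + 1) - 1)) • e = G⁻¹ • c • e := by rw [hcoef, mul_smul]
    _ ≤ G⁻¹ • G • Q k := smul_le_smul_of_nonneg_left
        (le_geom_sum_inv_smul_of_le_window_sum hlam₀ hstep hwin hk) (inv_nonneg.2 hG_pos.le)
    _ = Q k := inv_smul_smul₀ hG_pos.ne' _

end OrderedModule

-- In the Loewner order `A ≤ B` is by definition `(B - A).PosSemidef`.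
open scoped MatrixOrder in
theorem stmt7_general {m : ℕ} (lam : ℝ) (hlam : lam ∈ Set.Ioo (0 : ℝ) 1)
    (c : ℝ) (S : ℕ)
    (Q : ℕ → Matrix (Fin m) (Fin m) ℝ)
    (hstep : ∀ k, (Q (k + 1) - lam • Q k).PosSemidef)
    (hwin : ∀ j : ℕ, ((∑ i ∈ range (S + 1), Q (j + i))
        - c • (1 : Matrix (Fin m) (Fin m) ℝ)).PosSemidef) :
    ∀ k, S ≤ k →
      (Q k - (c * (lam⁻¹ - 1) / (lam⁻¹ ^ (S + 1) - 1))
          • (1 : Matrix (Fin m) (Fin m) ℝ)).PosSemidef :=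
  fun _ hk ↦ smul_le_of_smul_le_window_sum (Q := Q) hlam.1 hlam.2.ne hstep c 1 hwin hk

/-- Multiple-output analogue of Johnstone et al.'s Lemma 1: a uniform lower bound on a
sequence of PSD matrices `Q_k` satisfying `Q_k ⪰ λ Q_{k-1}` whose windows of length `S+1`
are uniformly bounded below by `c • I`. -/
theorem stmt7 {m : ℕ} (lam : ℝ) (hlam : lam ∈ Set.Ioo (0 : ℝ) 1)
    (c : ℝ) (hc : 0 < c) (S : ℕ)
    (Q : ℕ → Matrix (Fin m) (Fin m) ℝ)
    (hQ : ∀ k, (Q k).PosSemidef)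
    (hstep : ∀ k, (Q (k + 1) - lam • Q k).PosSemidef)
    (hwin : ∀ j : ℕ, ((∑ i ∈ range (S + 1), Q (j + i))
        - c • (1 : Matrix (Fin m) (Fin m) ℝ)).PosSemidef) :
    ∀ k, S ≤ k →
      (Q k - (c * (lam⁻¹ - 1) / (lam⁻¹ ^ (S + 1) - 1))
          • (1 : Matrix (Fin m) (Fin m) ℝ)).PosSemidef :=
  stmt7_general lam hlam c S Q hstep hwin
end

section
/- Let T be symmetric positive definite, λ ∈ (0,1), P symmetric positive definite, ψ ∈ ℝ^{m×n}, D = λT + ψᵀPψ, and define P₊^{-1} = λP^{-1} + ψT^{-1}ψᵀ and the error map θ̃₊ = (I − Pψ D^{-1} ψᵀ) θ̃. Then for every θ̃ ∈ ℝ^m: θ̃₊ᵀ P₊^{-1} θ̃₊ − θ̃ᵀ P^{-1} θ̃ = θ̃ᵀ[(λ−1)P^{-1} − λψ D^{-1} ψᵀ]θ̃. -/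
/-!
Write `A = 1 - P ψ D⁻¹ ψᵀ` for the error map. Since `ψᵀ P ψ = D - λT`, the updated information
matrix satisfies `P₊⁻¹ A = λ P⁻¹`, and by symmetry of `P` and `D` also `Aᵀ P⁻¹ = P⁻¹ - ψ D⁻¹ ψᵀ`.
Hence `Aᵀ P₊⁻¹ A = λ (P⁻¹ - ψ D⁻¹ ψᵀ)`, and the identity is the quadratic form of
`Aᵀ P₊⁻¹ A - P⁻¹`.
-/

open Matrix

namespace Matrix

variable {R : Type*} {m n : Type*} [Fintype m] [Fintype n]

theorem mulVec_dotProduct_mulVec_mulVec [CommSemiring R] (A : Matrix m n R) (M : Matrix m m R)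
    (x : n → R) :
    A *ᵥ x ⬝ᵥ M *ᵥ (A *ᵥ x) = x ⬝ᵥ (Aᵀ * M * A) *ᵥ x := by
  rw [dotProduct_mulVec, vecMul_mulVec, ← dotProduct_mulVec, mulVec_mulVec]

variable [CommRing R] [DecidableEq m] [DecidableEq n]

theorem forgetting_update_mul_errorMap {P : Matrix m m R} {T D : Matrix n n R}
    (ψ : Matrix m n R) (lam : R) (hP : IsUnit P.det) (hT : IsUnit T.det) (hD : IsUnit D.det)
    (hDdef : D = lam • T + ψᵀ * P * ψ) :
    (lam • P⁻¹ + ψ * T⁻¹ * ψᵀ) * (1 - P * ψ * D⁻¹ * ψᵀ) = lam • P⁻¹ := by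
  have hψPψ : ψᵀ * P * ψ = D - lam • T := by rw [hDdef]; abel
  have hTD : T⁻¹ * (ψᵀ * P * ψ) * D⁻¹ = T⁻¹ - lam • D⁻¹ := by
    rw [hψPψ, Matrix.mul_sub, Matrix.mul_smul, nonsing_inv_mul T hT, Matrix.sub_mul,
      Matrix.smul_mul, Matrix.one_mul, Matrix.mul_assoc, mul_nonsing_inv D hD, Matrix.mul_one]
  calc (lam • P⁻¹ + ψ * T⁻¹ * ψᵀ) * (1 - P * ψ * D⁻¹ * ψᵀ)
      = lam • P⁻¹ + ψ * T⁻¹ * ψᵀ - lam • (P⁻¹ * P * (ψ * D⁻¹ * ψᵀ))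
          - ψ * (T⁻¹ * (ψᵀ * P * ψ) * D⁻¹) * ψᵀ := by
        noncomm_ring
        simp only [Matrix.mul_assoc]
    _ = lam • P⁻¹ := by
        rw [nonsing_inv_mul P hP, hTD, Matrix.one_mul, Matrix.mul_sub, Matrix.sub_mul,
          Matrix.mul_smul, Matrix.smul_mul]
        abel

theorem transpose_errorMap_mul_inv {P : Matrix m m R} {D : Matrix n n R} (ψ : Matrix m n R)
    (hP : IsUnit P.det) (hPsymm : Pᵀ = P) (hDsymm : Dᵀ = D) :
    (1 - P * ψ * D⁻¹ * ψᵀ)ᵀ * P⁻¹ = P⁻¹ - ψ * D⁻¹ * ψᵀ := by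
  simp only [transpose_sub, transpose_one, transpose_mul, transpose_transpose,
    transpose_nonsing_inv, hDsymm, hPsymm, Matrix.sub_mul, Matrix.one_mul, Matrix.mul_assoc,
    mul_nonsing_inv P hP, Matrix.mul_one]

end Matrix

theorem Matrix.PosDef.smul_add_transpose_mul_mul {m n : Type*} [Fintype m] [Fintype n]
    {T : Matrix n n ℝ} {P : Matrix m m ℝ} (hT : T.PosDef) (hP : P.PosSemidef) {lam : ℝ}
    (hlam : 0 < lam) (ψ : Matrix m n ℝ) : (lam • T + ψᵀ * P * ψ).PosDef :=
  (hT.smul hlam).add_posSemidef (by simpa using hP.conjTranspose_mul_mul_same ψ)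

theorem Matrix.PosDef.transpose_eq {n : Type*} [Fintype n] {M : Matrix n n ℝ} (hM : M.PosDef) :
    Mᵀ = M := by
  rw [← conjTranspose_eq_transpose_of_trivial, hM.isHermitian.eq]

/-- One-step Lyapunov identity for the RLSFF estimation error. -/
theorem stmt9 {n m : ℕ} (T : Matrix (Fin n) (Fin n) ℝ) (hT : T.PosDef)
    (lam : ℝ) (hlam : lam ∈ Set.Ioo (0 : ℝ) 1)
    (P : Matrix (Fin m) (Fin m) ℝ) (hP : P.PosDef)
    (ψ : Matrix (Fin m) (Fin n) ℝ)
    (D : Matrix (Fin n) (Fin n) ℝ) (hD : D = lam • T + ψᵀ * P * ψ)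
    (Pplusinv : Matrix (Fin m) (Fin m) ℝ)
    (hPplusinv : Pplusinv = lam • P⁻¹ + ψ * T⁻¹ * ψᵀ) :
    ∀ θt : Fin m → ℝ,
      ((1 - P * ψ * D⁻¹ * ψᵀ).mulVec θt) ⬝ᵥ
          Pplusinv.mulVec ((1 - P * ψ * D⁻¹ * ψᵀ).mulVec θt)
        - θt ⬝ᵥ P⁻¹.mulVec θt
      = θt ⬝ᵥ ((lam - 1) • P⁻¹ - lam • (ψ * D⁻¹ * ψᵀ)).mulVec θt := by
  intro θt
  have hDpos : D.PosDef := hD ▸ hT.smul_add_transpose_mul_mul hP.posSemidef hlam.1 ψ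
  have hPunit : IsUnit P.det := hP.det_pos.ne'.isUnit
  rw [mulVec_dotProduct_mulVec_mulVec, Matrix.mul_assoc, hPplusinv,
    forgetting_update_mul_errorMap ψ lam hPunit hT.det_pos.ne'.isUnit hDpos.det_pos.ne'.isUnit hD,
    Matrix.mul_smul, transpose_errorMap_mul_inv ψ hPunit hP.transpose_eq hDpos.transpose_eq,
    ← dotProduct_sub, ← sub_mulVec]
  congr 2
  module
end

section
/- Under the assumptions of the previous identity, the Lyapunov function W_k = θ̃_kᵀ P_{k-1}^{-1} θ̃_k satisfies W_{k+1} ≤ λ W_k, and hence W_k ≤ λ^k θ̃_0ᵀ P_{-1}^{-1} θ̃_0 for all k ≥ 0. -/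
/-!
With `Q = λ P⁻¹ + ψ T⁻¹ ψᵀ`, `D = λ T + ψᵀ P ψ` and `E = 1 - P ψ D⁻¹ ψᵀ`, one has
`Q P ψ = ψ T⁻¹ D`, hence `Q E = λ P⁻¹` and `Eᵀ Q E = λ (P⁻¹ - ψ D⁻¹ ψᵀ)`. The subtracted term is
positive semidefinite, so the quadratic form of the new information matrix at the new error is at
most `λ` times the old one. Positive definiteness of every `P_k` propagates along the recursion, and
iterating the one-step decrease gives the geometric bound.
-/

open Matrix

namespace Matrix

lemma dotProduct_mulVec_conj {n : Type*} [Fintype n] (A B : Matrix n n ℝ) (x : n → ℝ) :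
    (A *ᵥ x) ⬝ᵥ (B *ᵥ (A *ᵥ x)) = x ⬝ᵥ ((Aᵀ * B * A) *ᵥ x) := by
  rw [← mulVec_mulVec, ← mulVec_mulVec, dotProduct_mulVec x, vecMul_transpose]

end Matrix

namespace ForgettingFactor

variable {m n : Type*} [Fintype m] [Fintype n]

/-- `D_k`, for `P = P_{k-1}` and `ψ = ψ_k`. -/
def denom (lam : ℝ) (T : Matrix n n ℝ) (ψ : Matrix m n ℝ) (P : Matrix m m ℝ) : Matrix n n ℝ :=
  lam • T + ψᵀ * P * ψ

lemma posDef_denom {lam : ℝ} {T : Matrix n n ℝ} {ψ : Matrix m n ℝ} {P : Matrix m m ℝ}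
    (hlam : 0 < lam) (hT : T.PosDef) (hP : P.PosSemidef) : (denom lam T ψ P).PosDef :=
  (hT.smul hlam).add_posSemidef (hP.conjTranspose_mul_mul_same ψ)

variable [DecidableEq m] [DecidableEq n]

/-- `P_k⁻¹`, for `P = P_{k-1}` and `ψ = ψ_k`. -/
noncomputable def infoUpdate (lam : ℝ) (T : Matrix n n ℝ) (ψ : Matrix m n ℝ) (P : Matrix m m ℝ) :
    Matrix m m ℝ :=
  lam • P⁻¹ + ψ * T⁻¹ * ψᵀ

/-- The matrix mapping `θ̃_k` to `θ̃_{k+1}`. -/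
noncomputable def errorTransition (lam : ℝ) (T : Matrix n n ℝ) (ψ : Matrix m n ℝ) (P : Matrix m m ℝ) :
    Matrix m m ℝ :=
  1 - P * ψ * (denom lam T ψ P)⁻¹ * ψᵀ

variable {lam : ℝ} {T : Matrix n n ℝ} {ψ : Matrix m n ℝ} {P : Matrix m m ℝ}

lemma posDef_infoUpdate (hlam : 0 < lam) (hT : T.PosSemidef) (hP : P.PosDef) :
    (infoUpdate lam T ψ P).PosDef :=
  (hP.inv.smul hlam).add_posSemidef (hT.inv.mul_mul_conjTranspose_same ψ)

lemma infoUpdate_mul_mul (hT : IsUnit T.det) (hP : IsUnit P.det) :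
    infoUpdate lam T ψ P * P * ψ = ψ * T⁻¹ * denom lam T ψ P := by
  simp only [infoUpdate, denom, Matrix.add_mul, Matrix.mul_add, Matrix.smul_mul, Matrix.mul_smul,
    nonsing_inv_mul _ hP, Matrix.one_mul, Matrix.mul_assoc, nonsing_inv_mul _ hT, Matrix.mul_one]

lemma infoUpdate_mul_errorTransition (hT : IsUnit T.det) (hP : IsUnit P.det)
    (hD : IsUnit (denom lam T ψ P).det) :
    infoUpdate lam T ψ P * errorTransition lam T ψ P = lam • P⁻¹ := by
  rw [errorTransition, Matrix.mul_sub, Matrix.mul_one, ← Matrix.mul_assoc, ← Matrix.mul_assoc,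
    ← Matrix.mul_assoc, infoUpdate_mul_mul hT hP, Matrix.mul_assoc _ _ (_⁻¹),
    mul_nonsing_inv _ hD, Matrix.mul_one, infoUpdate, add_sub_cancel_right]

lemma transpose_errorTransition_mul_inv (hP : IsUnit P.det) (hPsymm : Pᵀ = P)
    (hDsymm : (denom lam T ψ P)ᵀ = denom lam T ψ P) :
    (errorTransition lam T ψ P)ᵀ * P⁻¹ = P⁻¹ - ψ * (denom lam T ψ P)⁻¹ * ψᵀ := by
  simp only [errorTransition, transpose_sub, transpose_one, transpose_mul, transpose_transpose,
    transpose_nonsing_inv, hPsymm, hDsymm, Matrix.sub_mul, Matrix.one_mul, Matrix.mul_assoc,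
    mul_nonsing_inv _ hP, Matrix.mul_one]

lemma transpose_errorTransition_mul_infoUpdate_mul (hlam : 0 < lam) (hT : T.PosDef)
    (hP : P.PosDef) :
    (errorTransition lam T ψ P)ᵀ * infoUpdate lam T ψ P * errorTransition lam T ψ P
      = lam • (P⁻¹ - ψ * (denom lam T ψ P)⁻¹ * ψᵀ) := by
  have hD := posDef_denom (ψ := ψ) hlam hT hP.posSemidef
  rw [Matrix.mul_assoc, infoUpdate_mul_errorTransition hT.det_pos.ne'.isUnit
      hP.det_pos.ne'.isUnit hD.det_pos.ne'.isUnit, Matrix.mul_smul,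
    transpose_errorTransition_mul_inv hP.det_pos.ne'.isUnit hP.isHermitian.eq hD.isHermitian.eq]

lemma lyapunov_errorTransition_le (hlam : 0 < lam) (hT : T.PosDef) (hP : P.PosDef)
    (θ : m → ℝ) :
    (errorTransition lam T ψ P *ᵥ θ) ⬝ᵥ (infoUpdate lam T ψ P *ᵥ (errorTransition lam T ψ P *ᵥ θ))
      ≤ lam * (θ ⬝ᵥ P⁻¹ *ᵥ θ) := by
  have hgain : 0 ≤ θ ⬝ᵥ (ψ * (denom lam T ψ P)⁻¹ * ψᵀ) *ᵥ θ := by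
    simpa using ((posDef_denom hlam hT hP.posSemidef).inv.posSemidef.mul_mul_conjTranspose_same
      ψ).dotProduct_mulVec_nonneg θ
  rw [dotProduct_mulVec_conj, transpose_errorTransition_mul_infoUpdate_mul hlam hT hP,
    smul_mulVec, sub_mulVec, dotProduct_smul, dotProduct_sub, smul_eq_mul]
  nlinarith

end ForgettingFactor

open ForgettingFactor in
/-- The Lyapunov function `W k = θ̃_kᵀ P_{k-1}⁻¹ θ̃_k` of the RLSFF error dynamics
decreases geometrically: `W (k+1) ≤ λ W k` and `W k ≤ λ^k W 0`.
Here `Pprev k` stands for `P_{k-1}` (so `Pprev 0 = P_{-1}`). -/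
theorem stmt10 {n m : ℕ} (T : Matrix (Fin n) (Fin n) ℝ) (hT : T.PosDef)
    (lam : ℝ) (hlam : lam ∈ Set.Ioo (0 : ℝ) 1)
    (ψ : ℕ → Matrix (Fin m) (Fin n) ℝ)
    (Pprev : ℕ → Matrix (Fin m) (Fin m) ℝ) (hP0 : (Pprev 0).PosDef)
    (hPrec : ∀ k, (Pprev (k + 1))⁻¹
        = lam • (Pprev k)⁻¹ + ψ k * T⁻¹ * (ψ k)ᵀ)
    (D : ℕ → Matrix (Fin n) (Fin n) ℝ)
    (hD : ∀ k, D k = lam • T + (ψ k)ᵀ * Pprev k * ψ k)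
    (θt : ℕ → Fin m → ℝ)
    (hθ : ∀ k, θt (k + 1) = (1 - Pprev k * ψ k * (D k)⁻¹ * (ψ k)ᵀ).mulVec (θt k))
    (W : ℕ → ℝ) (hW : ∀ k, W k = θt k ⬝ᵥ (Pprev k)⁻¹.mulVec (θt k)) :
    (∀ k, W (k + 1) ≤ lam * W k) ∧
      ∀ k, W k ≤ lam ^ k * (θt 0 ⬝ᵥ (Pprev 0)⁻¹.mulVec (θt 0)) := by
  have hPos : ∀ k, (Pprev k).PosDef := by
    intro k
    induction k with
    | zero => exact hP0
    | succ k ih =>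
      exact posDef_inv_iff.mp (hPrec k ▸ posDef_infoUpdate hlam.1 hT.posSemidef ih)
  have hstep : ∀ k, W (k + 1) ≤ lam * W k := by
    intro k
    rw [hW, hW, hPrec, hθ, hD]
    exact lyapunov_errorTransition_le hlam.1 hT (hPos k) (θt k)
  exact ⟨hstep, fun k => hW 0 ▸ le_geom hlam.1.le k fun j _ => hstep j⟩
end

section
/- If the estimation error satisfies |θ̃_k|² ≤ γλ^k|θ̃_0|² (exponential convergence) and the system output is perturbed by bounded additive noise |w_k| ≤ w̄, then under the same RLSFF update with persistence of excitation the error remains bounded and converges to a ball around the origin of radius proportional to w̄: limsup_k |θ̃_k| ≤ c·w̄ for some constant c depending on λ, α, S, T, P_{-1}, β. -/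
/-!
The information-weighted error `z_k = P_{k-1}⁻¹ θ̃_k` obeys the contracting recursion
`z_{k+1} = λ z_k - ψ_k T⁻¹ w_{k+1}`, and the upper excitation bound gives `‖ψ_k‖ ≤ √β`, so
`‖z_k‖ ≤ λ^k ‖z_0‖ + √β ‖T⁻¹‖ w̄ / (1 - λ)`. Lower persistence of excitation makes the information
matrices uniformly coercive after `S + 1` steps, `P_{k-1}⁻¹ ≥ μ I`, hence `‖θ̃_k‖ ≤ ‖z_k‖ / μ`.
-/

open Matrix Finset Filter WithLp
open scoped Matrix.Norms.L2Operator

variable {ι κ σ : Type*} [Fintype ι] [Fintype κ]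

lemma dotProduct_self_eq_norm_sq (x : ι → ℝ) : x ⬝ᵥ x = ‖toLp 2 x‖ ^ 2 := by
  rw [← real_inner_self_eq_norm_sq, EuclideanSpace.inner_toLp_toLp, star_trivial]

lemma sqrt_dotProduct_self_eq_norm (x : ι → ℝ) : √(x ⬝ᵥ x) = ‖toLp 2 x‖ := by
  rw [dotProduct_self_eq_norm_sq, Real.sqrt_sq (norm_nonneg _)]

lemma dotProduct_eq_inner (x y : ι → ℝ) : x ⬝ᵥ y = inner ℝ (toLp 2 x) (toLp 2 y) := by
  rw [EuclideanSpace.inner_toLp_toLp, star_trivial, dotProduct_comm]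

lemma dotProduct_mul_mul_transpose_mulVec (A : Matrix ι κ ℝ) (B : Matrix κ κ ℝ) (x : ι → ℝ) :
    x ⬝ᵥ (A * B * Aᵀ) *ᵥ x = (Aᵀ *ᵥ x) ⬝ᵥ B *ᵥ (Aᵀ *ᵥ x) := by
  rw [← mulVec_mulVec, ← mulVec_mulVec, dotProduct_mulVec, ← mulVec_transpose]

lemma dotProduct_mul_transpose_mulVec (A : Matrix ι κ ℝ) (x : ι → ℝ) :
    x ⬝ᵥ (A * Aᵀ) *ᵥ x = ‖toLp 2 (Aᵀ *ᵥ x)‖ ^ 2 := by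
  rw [← mulVec_mulVec, dotProduct_mulVec, ← mulVec_transpose, dotProduct_self_eq_norm_sq]

lemma dotProduct_sum_mul_transpose_mulVec (s : Finset σ) (A : σ → Matrix ι κ ℝ) (x : ι → ℝ) :
    x ⬝ᵥ (∑ i ∈ s, A i * (A i)ᵀ) *ᵥ x = ∑ i ∈ s, ‖toLp 2 ((A i)ᵀ *ᵥ x)‖ ^ 2 := by
  simp only [sum_mulVec, dotProduct_sum, dotProduct_mul_transpose_mulVec]

section PosSemidef

variable [DecidableEq ι]

lemma Matrix.PosSemidef.mul_dotProduct_self_le_dotProduct_mulVec {A : Matrix ι ι ℝ} {α : ℝ}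
    (h : (A - α • 1).PosSemidef) (x : ι → ℝ) : α * (x ⬝ᵥ x) ≤ x ⬝ᵥ A *ᵥ x := by
  simpa [sub_mulVec, dotProduct_sub, smul_mulVec] using h.dotProduct_mulVec_nonneg x

lemma Matrix.PosSemidef.dotProduct_mulVec_le_mul_dotProduct_self {A : Matrix ι ι ℝ} {β : ℝ}
    (h : (β • 1 - A).PosSemidef) (x : ι → ℝ) : x ⬝ᵥ A *ᵥ x ≤ β * (x ⬝ᵥ x) := by
  simpa [sub_mulVec, dotProduct_sub, smul_mulVec] using h.dotProduct_mulVec_nonneg x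

end PosSemidef

lemma mul_norm_le_norm_mulVec_of_mul_dotProduct_self_le {A : Matrix ι ι ℝ} {μ : ℝ} {x : ι → ℝ}
    (h : μ * (x ⬝ᵥ x) ≤ x ⬝ᵥ A *ᵥ x) : μ * ‖toLp 2 x‖ ≤ ‖toLp 2 (A *ᵥ x)‖ := by
  rcases (norm_nonneg (toLp 2 x)).eq_or_lt with hx | hx
  · simp [← hx]
  refine le_of_mul_le_mul_right ?_ hx
  calc μ * ‖toLp 2 x‖ * ‖toLp 2 x‖ = μ * (x ⬝ᵥ x) := by rw [dotProduct_self_eq_norm_sq]; ring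
    _ ≤ inner ℝ (toLp 2 x) (toLp 2 (A *ᵥ x)) := by rwa [← dotProduct_eq_inner]
    _ ≤ ‖toLp 2 (A *ᵥ x)‖ * ‖toLp 2 x‖ := by rw [mul_comm]; exact real_inner_le_norm _ _

lemma Matrix.PosDef.exists_pos_mul_dotProduct_self_le {A : Matrix ι ι ℝ} (hA : A.PosDef) :
    ∃ c > 0, ∀ x, c * (x ⬝ᵥ x) ≤ x ⬝ᵥ A *ᵥ x := by
  cases isEmpty_or_nonempty ι
  · exact ⟨1, one_pos, fun x => by simp [dotProduct]⟩
  set q : EuclideanSpace ℝ ι → ℝ := fun v => ofLp v ⬝ᵥ A *ᵥ ofLp v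
  have hq_smul (r : ℝ) (v) : q (r • v) = r ^ 2 * q v := by
    simp only [q, ofLp_smul, mulVec_smul, dotProduct_smul, smul_dotProduct, smul_eq_mul]; ring
  obtain ⟨u, hu, hmin⟩ := (isCompact_sphere (0 : EuclideanSpace ℝ ι) 1).exists_isMinOn
    (NormedSpace.sphere_nonempty.mpr zero_le_one) (by fun_prop : Continuous q).continuousOn
  have hu0 : ofLp u ≠ 0 := by
    rw [Ne, ofLp_eq_zero]; exact Metric.ne_of_mem_sphere hu one_ne_zero
  refine ⟨q u, by simpa using hA.dotProduct_mulVec_pos hu0, fun x => ?_⟩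
  rcases eq_or_ne x 0 with rfl | hx
  · simp
  have hr : 0 < ‖toLp 2 x‖ := by simpa using hx
  have hv : ‖toLp 2 x‖⁻¹ • toLp 2 x ∈ Metric.sphere (0 : EuclideanSpace ℝ ι) 1 := by
    simp [norm_smul, hr.ne']
  calc q u * (x ⬝ᵥ x) ≤ q (‖toLp 2 x‖⁻¹ • toLp 2 x) * ‖toLp 2 x‖ ^ 2 := by
        rw [dotProduct_self_eq_norm_sq]; gcongr; exact hmin hv
    _ = x ⬝ᵥ A *ᵥ x := by rw [hq_smul]; field_simp; rfl

lemma Matrix.l2_opNorm_le_of_norm_mulVec_le [DecidableEq κ] {A : Matrix ι κ ℝ} {c : ℝ} (hc : 0 ≤ c)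
    (h : ∀ x, ‖toLp 2 (A *ᵥ x)‖ ≤ c * ‖toLp 2 x‖) : ‖A‖ ≤ c := by
  rw [l2_opNorm_def]
  exact ContinuousLinearMap.opNorm_le_bound _ hc fun x => h (ofLp x)

lemma Matrix.l2_opNorm_le_sqrt_of_posSemidef_smul_one_sub_sum [DecidableEq ι] [DecidableEq κ]
    {s : Finset σ} {A : σ → Matrix ι κ ℝ} {β : ℝ}
    (h : (β • 1 - ∑ i ∈ s, A i * (A i)ᵀ).PosSemidef) {i₀ : σ} (hi₀ : i₀ ∈ s) : ‖A i₀‖ ≤ √β := by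
  rw [← l2_opNorm_conjTranspose, conjTranspose_eq_transpose_of_trivial]
  refine l2_opNorm_le_of_norm_mulVec_le (Real.sqrt_nonneg β) fun x => ?_
  have hsq : ‖toLp 2 ((A i₀)ᵀ *ᵥ x)‖ ^ 2 ≤ β * ‖toLp 2 x‖ ^ 2 := by
    calc ‖toLp 2 ((A i₀)ᵀ *ᵥ x)‖ ^ 2 ≤ ∑ i ∈ s, ‖toLp 2 ((A i)ᵀ *ᵥ x)‖ ^ 2 :=
          single_le_sum (f := fun i => ‖toLp 2 ((A i)ᵀ *ᵥ x)‖ ^ 2) (fun i _ => sq_nonneg _) hi₀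
      _ ≤ β * ‖toLp 2 x‖ ^ 2 := by
          rw [← dotProduct_sum_mul_transpose_mulVec, ← dotProduct_self_eq_norm_sq]
          exact h.dotProduct_mulVec_le_mul_dotProduct_self x
  simpa [Real.sqrt_mul' β (sq_nonneg _)] using Real.sqrt_le_sqrt hsq

lemma Matrix.PosDef.smul_add_mul_mul_transpose [DecidableEq ι] {A : Matrix ι ι ℝ} (hA : A.PosDef)
    {c : ℝ} (hc : 0 < c) {B : Matrix κ κ ℝ} (hB : B.PosSemidef) (C : Matrix ι κ ℝ) :
    (c • A + C * B * Cᵀ).PosDef := by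
  simpa [conjTranspose_eq_transpose_of_trivial] using
    (hA.smul hc).add_posSemidef (hB.mul_mul_conjTranspose_same C)

section RLSUpdate

variable {K : Type*} [Field K] [DecidableEq ι] [DecidableEq κ]
  {P Q : Matrix ι ι K} {T D : Matrix κ κ K} {ψ : Matrix ι κ K} {lam : K}

lemma rls_inv_mul_gain (hP : IsUnit P.det) (hT : IsUnit T.det) (hD : IsUnit D.det)
    (hQ : Q⁻¹ = lam • P⁻¹ + ψ * T⁻¹ * ψᵀ) (hD_eq : D = lam • T + ψᵀ * P * ψ) :
    Q⁻¹ * (P * ψ * D⁻¹) = ψ * T⁻¹ := by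
  have h : Q⁻¹ * (P * ψ) = ψ * T⁻¹ * D := by
    rw [hQ, hD_eq, Matrix.add_mul, Matrix.mul_add, Matrix.smul_mul, Matrix.mul_smul,
      Matrix.nonsing_inv_mul_cancel_left _ _ hP, Matrix.nonsing_inv_mul_cancel_right _ _ hT]
    simp only [Matrix.mul_assoc]
  rw [← Matrix.mul_assoc Q⁻¹, h, Matrix.mul_nonsing_inv_cancel_right _ _ hD]

lemma rls_inv_mul_transition (hP : IsUnit P.det) (hT : IsUnit T.det) (hD : IsUnit D.det)
    (hQ : Q⁻¹ = lam • P⁻¹ + ψ * T⁻¹ * ψᵀ) (hD_eq : D = lam • T + ψᵀ * P * ψ) :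
    Q⁻¹ * (1 - P * ψ * D⁻¹ * ψᵀ) = lam • P⁻¹ := by
  rw [Matrix.mul_sub, Matrix.mul_one, ← Matrix.mul_assoc, rls_inv_mul_gain hP hT hD hQ hD_eq, hQ,
    add_sub_cancel_right]

lemma rls_inv_mulVec_update (hP : IsUnit P.det) (hT : IsUnit T.det) (hD : IsUnit D.det)
    (hQ : Q⁻¹ = lam • P⁻¹ + ψ * T⁻¹ * ψᵀ) (hD_eq : D = lam • T + ψᵀ * P * ψ)
    (θ : ι → K) (w : κ → K) :
    Q⁻¹ *ᵥ ((1 - P * ψ * D⁻¹ * ψᵀ) *ᵥ θ - (P * ψ * D⁻¹) *ᵥ w)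
      = lam • (P⁻¹ *ᵥ θ) - (ψ * T⁻¹) *ᵥ w := by
  rw [mulVec_sub, mulVec_mulVec, mulVec_mulVec, rls_inv_mul_transition hP hT hD hQ hD_eq,
    rls_inv_mul_gain hP hT hD hQ hD_eq, smul_mulVec]

end RLSUpdate

section Sequences

variable {r : ℝ}

lemma norm_le_pow_mul_add_div_of_eq_smul_sub {E : Type*} [SeminormedAddCommGroup E]
    [NormedSpace ℝ E] {z v : ℕ → E} {b : ℝ} (hr0 : 0 ≤ r) (hr1 : r < 1)
    (hz : ∀ k, z (k + 1) = r • z k - v k) (hv : ∀ k, ‖v k‖ ≤ b) (k : ℕ) :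
    ‖z k‖ ≤ r ^ k * ‖z 0‖ + b / (1 - r) := by
  induction k with
  | zero =>
    have : 0 ≤ b / (1 - r) := div_nonneg ((norm_nonneg _).trans (hv 0)) (sub_nonneg.mpr hr1.le)
    simpa
  | succ k ih =>
    calc ‖z (k + 1)‖ ≤ r * ‖z k‖ + b := by
          rw [hz k]
          refine (norm_sub_le _ _).trans ?_
          rw [norm_smul, Real.norm_of_nonneg hr0]
          gcongr
          exact hv k
      _ ≤ r * (r ^ k * ‖z 0‖ + b / (1 - r)) + b := by gcongr
      _ = r ^ (k + 1) * ‖z 0‖ + b / (1 - r) := by field_simp [(sub_pos.mpr hr1).ne']; ring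

lemma pow_mul_sum_le_of_mul_add_le {q s : ℕ → ℝ} (hr0 : 0 ≤ r) (hr1 : r ≤ 1) {j : ℕ}
    (hq : 0 ≤ q j) (hs : ∀ k, 0 ≤ s k) (h : ∀ k, r * q k + s k ≤ q (k + 1)) (t : ℕ) :
    r ^ t * ∑ i ∈ range t, s (j + i) ≤ q (j + t) := by
  induction t with
  | zero => simpa using hq
  | succ t ih =>
    calc r ^ (t + 1) * ∑ i ∈ range (t + 1), s (j + i)
        = r * (r ^ t * ∑ i ∈ range t, s (j + i)) + r ^ (t + 1) * s (j + t) := by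
          rw [sum_range_succ]; ring
      _ ≤ r * q (j + t) + s (j + t) := by
          gcongr
          exact mul_le_of_le_one_left (hs _) (pow_le_one₀ hr0 hr1)
      _ ≤ q (j + (t + 1)) := h (j + t)

lemma exists_le_and_limsup_le_of_eventually_le {f : ℕ → ℝ} {a b : ℝ} (hr0 : 0 ≤ r) (hr1 : r < 1)
    (hf : ∀ k, 0 ≤ f k) (h : ∀ᶠ k in atTop, f k ≤ r ^ k * a + b) :
    (∃ M, ∀ k, f k ≤ M) ∧ limsup f atTop ≤ b := by
  have hlim : Tendsto (fun k => r ^ k * a + b) atTop (nhds b) := by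
    simpa using ((tendsto_pow_atTop_nhds_zero_of_lt_one hr0 hr1).mul_const a).add_const b
  obtain ⟨M, hM⟩ := (hlim.isBoundedUnder_le.mono_le h).bddAbove_range
  refine ⟨⟨M, fun k => hM ⟨k, rfl⟩⟩, ?_⟩
  calc limsup f atTop ≤ limsup (fun k => r ^ k * a + b) atTop :=
        limsup_le_limsup h (isCoboundedUnder_le_of_le atTop hf) hlim.isBoundedUnder_le
    _ = b := hlim.limsup_eq

lemma exists_le_and_limsup_le_of_eq_smul_sub {E : Type*} [SeminormedAddCommGroup E]
    [NormedSpace ℝ E] {z v : ℕ → E} {f : ℕ → ℝ} {b μ : ℝ} (hr0 : 0 ≤ r) (hr1 : r < 1) (hμ : 0 < μ)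
    (hz : ∀ k, z (k + 1) = r • z k - v k) (hv : ∀ k, ‖v k‖ ≤ b) (hf0 : ∀ k, 0 ≤ f k)
    (hf : ∀ᶠ k in atTop, μ * f k ≤ ‖z k‖) :
    (∃ M, ∀ k, f k ≤ M) ∧ limsup f atTop ≤ b / (μ * (1 - r)) := by
  refine exists_le_and_limsup_le_of_eventually_le hr0 hr1 hf0 (a := μ⁻¹ * ‖z 0‖) ?_
  filter_upwards [hf] with k hk
  calc f k ≤ μ⁻¹ * ‖z k‖ := by rwa [le_inv_mul_iff₀ hμ]
    _ ≤ μ⁻¹ * (r ^ k * ‖z 0‖ + b / (1 - r)) := by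
        gcongr
        exact norm_le_pow_mul_add_div_of_eq_smul_sub hr0 hr1 hz hv k
    _ = r ^ k * (μ⁻¹ * ‖z 0‖) + b / (μ * (1 - r)) := by rw [mul_comm μ, ← div_div]; ring

end Sequences

section InformationMatrix

variable [DecidableEq ι] [DecidableEq κ] {T : Matrix κ κ ℝ} {lam : ℝ} {ψ : ℕ → Matrix ι κ ℝ}

lemma posDef_of_inv_eq_smul_inv_add {P : ℕ → Matrix ι ι ℝ} (hT : T.PosDef) (hlam : 0 < lam)
    (hP0 : (P 0).PosDef) (hrec : ∀ k, (P (k + 1))⁻¹ = lam • (P k)⁻¹ + ψ k * T⁻¹ * (ψ k)ᵀ)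
    (k : ℕ) : (P k).PosDef := by
  induction k with
  | zero => exact hP0
  | succ k ih =>
    exact posDef_inv_iff.mp <|
      (hrec k) ▸ ih.inv.smul_add_mul_mul_transpose hlam hT.inv.posSemidef (ψ k)

lemma rls_inv_mulVec_update_of_posDef {P Q : Matrix ι ι ℝ} {D : Matrix κ κ ℝ} {φ : Matrix ι κ ℝ}
    (hT : T.PosDef) (hlam : 0 < lam) (hP : P.PosDef)
    (hQ : Q⁻¹ = lam • P⁻¹ + φ * T⁻¹ * φᵀ) (hD_eq : D = lam • T + φᵀ * P * φ)
    (θ : ι → ℝ) (w : κ → ℝ) :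
    Q⁻¹ *ᵥ ((1 - P * φ * D⁻¹ * φᵀ) *ᵥ θ - (P * φ * D⁻¹) *ᵥ w)
      = lam • (P⁻¹ *ᵥ θ) - (φ * T⁻¹) *ᵥ w := by
  have hD : D.PosDef := by
    simpa [← hD_eq] using hT.smul_add_mul_mul_transpose hlam hP.posSemidef φᵀ
  exact rls_inv_mulVec_update ((isUnit_iff_isUnit_det _).mp hP.isUnit)
    ((isUnit_iff_isUnit_det _).mp hT.isUnit) ((isUnit_iff_isUnit_det _).mp hD.isUnit) hQ hD_eq θ w

lemma exists_pos_mul_dotProduct_self_le_of_persistent_excitation {Q : ℕ → Matrix ι ι ℝ}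
    {α : ℝ} {S : ℕ} (hT : T.PosDef) (hlam0 : 0 < lam) (hlam1 : lam ≤ 1) (hα : 0 < α)
    (hPE : ∀ j, ((∑ i ∈ range (S + 1), ψ (j + i) * (ψ (j + i))ᵀ) - α • 1).PosSemidef)
    (hQ : ∀ k, (Q k).PosSemidef) (hrec : ∀ k, Q (k + 1) = lam • Q k + ψ k * T⁻¹ * (ψ k)ᵀ) :
    ∃ μ > 0, ∀ j x, μ * (x ⬝ᵥ x) ≤ x ⬝ᵥ Q (j + (S + 1)) *ᵥ x := by
  obtain ⟨c, hc, hcT⟩ := hT.inv.exists_pos_mul_dotProduct_self_le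
  refine ⟨lam ^ (S + 1) * (c * α), by positivity, fun j x => ?_⟩
  have hstep (k : ℕ) :
      lam * (x ⬝ᵥ Q k *ᵥ x) + c * ‖toLp 2 ((ψ k)ᵀ *ᵥ x)‖ ^ 2 ≤ x ⬝ᵥ Q (k + 1) *ᵥ x := by
    rw [hrec k, add_mulVec, dotProduct_add, smul_mulVec, dotProduct_smul, smul_eq_mul,
      dotProduct_mul_mul_transpose_mulVec, ← dotProduct_self_eq_norm_sq]
    gcongr
    exact hcT _
  have hunroll := pow_mul_sum_le_of_mul_add_le hlam0.le hlam1
    (by simpa using (hQ j).dotProduct_mulVec_nonneg x) (fun k => by positivity) hstep (S + 1)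
  calc lam ^ (S + 1) * (c * α) * (x ⬝ᵥ x) = lam ^ (S + 1) * (c * (α * (x ⬝ᵥ x))) := by ring
    _ ≤ lam ^ (S + 1) * (c * ∑ i ∈ range (S + 1), ‖toLp 2 ((ψ (j + i))ᵀ *ᵥ x)‖ ^ 2) := by
        rw [← dotProduct_sum_mul_transpose_mulVec]
        gcongr
        exact (hPE j).mul_dotProduct_self_le_dotProduct_mulVec x
    _ ≤ x ⬝ᵥ Q (j + (S + 1)) *ᵥ x := by rwa [mul_sum]

end InformationMatrix

theorem stmt18_general {n m : ℕ} (T : Matrix (Fin n) (Fin n) ℝ) (hT : T.PosDef)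
    (lam : ℝ) (hlam : lam ∈ Set.Ioo (0 : ℝ) 1)
    (S : ℕ) (α β : ℝ) (hα : 0 < α)
    (ψ : ℕ → Matrix (Fin m) (Fin n) ℝ)
    (hPE₁ : ∀ j : ℕ, ((∑ i ∈ range (S + 1), ψ (j + i) * (ψ (j + i))ᵀ)
        - α • (1 : Matrix (Fin m) (Fin m) ℝ)).PosSemidef)
    (hPE₂ : ∀ j : ℕ, (β • (1 : Matrix (Fin m) (Fin m) ℝ)
        - ∑ i ∈ range (S + 1), ψ (j + i) * (ψ (j + i))ᵀ).PosSemidef)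
    (Pprev : ℕ → Matrix (Fin m) (Fin m) ℝ) (hP0 : (Pprev 0).PosDef)
    (hPrec : ∀ k, (Pprev (k + 1))⁻¹ = lam • (Pprev k)⁻¹ + ψ k * T⁻¹ * (ψ k)ᵀ)
    (D : ℕ → Matrix (Fin n) (Fin n) ℝ)
    (hD : ∀ k, D k = lam • T + (ψ k)ᵀ * Pprev k * ψ k)
    (w : ℕ → Fin n → ℝ) (wbar : ℝ)
    (hw : ∀ k, Real.sqrt (w k ⬝ᵥ w k) ≤ wbar)
    (θt : ℕ → Fin m → ℝ)
    (hθ : ∀ k, θt (k + 1) = (1 - Pprev k * ψ k * (D k)⁻¹ * (ψ k)ᵀ).mulVec (θt k)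
        - (Pprev k * ψ k * (D k)⁻¹).mulVec (w (k + 1))) :
    (∃ M : ℝ, ∀ k, Real.sqrt (θt k ⬝ᵥ θt k) ≤ M) ∧
      ∃ c : ℝ, 0 < c ∧
        Filter.limsup (fun k => Real.sqrt (θt k ⬝ᵥ θt k)) Filter.atTop ≤ c * wbar := by
  obtain ⟨hlam0, hlam1⟩ := hlam
  have hP := posDef_of_inv_eq_smul_inv_add hT hlam0 hP0 hPrec
  set z : ℕ → Fin m → ℝ := fun k => (Pprev k)⁻¹ *ᵥ θt k
  have hz (k : ℕ) :
      toLp 2 (z (k + 1)) = lam • toLp 2 (z k) - toLp 2 ((ψ k * T⁻¹) *ᵥ w (k + 1)) := by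
    simp only [z, hθ k, rls_inv_mulVec_update_of_posDef hT hlam0 (hP k) (hPrec k) (hD k),
      toLp_sub, toLp_smul]
  have hwbar : 0 ≤ wbar := (Real.sqrt_nonneg _).trans (hw 0)
  have hψ (k : ℕ) : ‖ψ k‖ ≤ √β := by
    simpa using l2_opNorm_le_sqrt_of_posSemidef_smul_one_sub_sum (hPE₂ k) (mem_range.mpr S.succ_pos)
  have hnoise (k : ℕ) : ‖toLp 2 ((ψ k * T⁻¹) *ᵥ w (k + 1))‖ ≤ √β * ‖T⁻¹‖ * wbar := by
    calc ‖toLp 2 ((ψ k * T⁻¹) *ᵥ w (k + 1))‖ ≤ ‖ψ k * T⁻¹‖ * ‖toLp 2 (w (k + 1))‖ :=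
          l2_opNorm_mulVec _ _
      _ ≤ ‖ψ k‖ * ‖T⁻¹‖ * wbar := by
          rw [← sqrt_dotProduct_self_eq_norm]
          gcongr
          exacts [l2_opNorm_mul _ _, hw _]
      _ ≤ √β * ‖T⁻¹‖ * wbar := by gcongr; exact hψ k
  obtain ⟨μ, hμ, hcoer⟩ := exists_pos_mul_dotProduct_self_le_of_persistent_excitation hT hlam0
    hlam1.le hα hPE₁ (fun k => (hP k).inv.posSemidef) hPrec
  have hθz : ∀ᶠ k in atTop, μ * √(θt k ⬝ᵥ θt k) ≤ ‖toLp 2 (z k)‖ := by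
    filter_upwards [eventually_ge_atTop (S + 1)] with k hk
    obtain ⟨j, rfl⟩ : ∃ j, k = j + (S + 1) := ⟨k - (S + 1), by omega⟩
    rw [sqrt_dotProduct_self_eq_norm]
    exact mul_norm_le_norm_mulVec_of_mul_dotProduct_self_le (hcoer j _)
  obtain ⟨hbdd, hlimsup⟩ := exists_le_and_limsup_le_of_eq_smul_sub hlam0.le hlam1 hμ hz hnoise
    (fun k => Real.sqrt_nonneg _) hθz
  refine ⟨hbdd, √β * ‖T⁻¹‖ / (μ * (1 - lam)) + 1, by positivity, hlimsup.trans ?_⟩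
  calc √β * ‖T⁻¹‖ * wbar / (μ * (1 - lam)) = √β * ‖T⁻¹‖ / (μ * (1 - lam)) * wbar := by ring
    _ ≤ (√β * ‖T⁻¹‖ / (μ * (1 - lam)) + 1) * wbar := by gcongr; linarith

/-- Bounded additive noise: under persistence of excitation, the RLSFF error driven by
noise `w` with `|w_k| ≤ w̄` stays bounded and its limsup is at most `c · w̄` for some
constant `c > 0` (depending on `λ, α, β, S, T, P_{-1}`).
`Pprev k` stands for `P_{k-1}` (so `Pprev 0 = P_{-1}`). -/
theorem stmt18 {n m : ℕ} (T : Matrix (Fin n) (Fin n) ℝ) (hT : T.PosDef)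
    (lam : ℝ) (hlam : lam ∈ Set.Ioo (0 : ℝ) 1)
    (S : ℕ) (α β : ℝ) (hα : 0 < α) (hβ : 0 < β)
    (ψ : ℕ → Matrix (Fin m) (Fin n) ℝ)
    (hPE₁ : ∀ j : ℕ, ((∑ i ∈ range (S + 1), ψ (j + i) * (ψ (j + i))ᵀ)
        - α • (1 : Matrix (Fin m) (Fin m) ℝ)).PosSemidef)
    (hPE₂ : ∀ j : ℕ, (β • (1 : Matrix (Fin m) (Fin m) ℝ)
        - ∑ i ∈ range (S + 1), ψ (j + i) * (ψ (j + i))ᵀ).PosSemidef)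
    (Pprev : ℕ → Matrix (Fin m) (Fin m) ℝ) (hP0 : (Pprev 0).PosDef)
    (hPrec : ∀ k, (Pprev (k + 1))⁻¹ = lam • (Pprev k)⁻¹ + ψ k * T⁻¹ * (ψ k)ᵀ)
    (D : ℕ → Matrix (Fin n) (Fin n) ℝ)
    (hD : ∀ k, D k = lam • T + (ψ k)ᵀ * Pprev k * ψ k)
    (w : ℕ → Fin n → ℝ) (wbar : ℝ) (hwbar : 0 ≤ wbar)
    (hw : ∀ k, Real.sqrt (w k ⬝ᵥ w k) ≤ wbar)
    (θt : ℕ → Fin m → ℝ)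
    (hθ : ∀ k, θt (k + 1) = (1 - Pprev k * ψ k * (D k)⁻¹ * (ψ k)ᵀ).mulVec (θt k)
        - (Pprev k * ψ k * (D k)⁻¹).mulVec (w (k + 1))) :
    (∃ M : ℝ, ∀ k, Real.sqrt (θt k ⬝ᵥ θt k) ≤ M) ∧
      ∃ c : ℝ, 0 < c ∧
        Filter.limsup (fun k => Real.sqrt (θt k ⬝ᵥ θt k)) Filter.atTop ≤ c * wbar :=
  stmt18_general T hT lam hlam S α β hα ψ hPE₁ hPE₂ Pprev hP0 hPrec D hD w wbar hw θt hθ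
end
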